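/- arXiv:1501.02454 — 5 statements merged into one kernel-verified Lean document; each statement's English description precedes it below -/
import Mathlib

section
/- For any real number ν > 0 and any vector n ∈ ℝ^m, the set S = { x ∈ ℝ^m | ν · e^{n·x} < 1 } is convex, and the function f(x) = -ln(1 - ν · e^{n·x}) is convex on S. -/
open Real Set

lemma g_convexOn : ConvexOn ℝ (Iio (1:ℝ)) (fun t => -Real.log (1 - t)) := by
  have hlog : ConvexOn ℝ (Ioi (0:ℝ)) (fun x => -Real.log x) :=
    (strictConcaveOn_log_Ioi.concaveOn).neg
  set A : ℝ →ᵃ[ℝ] ℝ := AffineMap.lineMap (1:ℝ) (0:ℝ) with hAdef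
  have hAapp : ∀ t : ℝ, A t = 1 - t := by
    intro t; simp [hAdef, AffineMap.lineMap_apply]; ring
  have hA : ConvexOn ℝ (A ⁻¹' (Ioi 0)) ((fun x => -Real.log x) ∘ A) :=
    hlog.comp_affineMap _
  have hset : A ⁻¹' (Ioi 0) = Iio 1 := by
    ext t; simp [hAapp t]
  have hfun : ((fun x => -Real.log x) ∘ A) = fun t => -Real.log (1 - t) := by
    funext t; simp [Function.comp, hAapp t]
  rwa [hset, hfun] at hA

lemma g_monotoneOn : MonotoneOn (fun t => -Real.log (1 - t)) (Iio (1:ℝ)) := by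
  intro a ha b hb hab
  simp only [mem_Iio] at ha hb
  have : Real.log (1 - b) ≤ Real.log (1 - a) :=
    Real.log_le_log (by linarith) (by linarith)
  show -Real.log (1 - a) ≤ -Real.log (1 - b)
  linarith

lemma comb_lt_one {a b t s : ℝ} (ha : 0 ≤ a) (hb : 0 ≤ b) (hab : a + b = 1)
    (ht : t < 1) (hs : s < 1) : a * t + b * s < 1 := by
  rcases eq_or_lt_of_le ha with h | h
  · have hb1 : b = 1 := by linarith
    simp [← h, hb1, hs]
  · have h1 : a * t < a := by nlinarith
    have h2 : b * s ≤ b := by nlinarith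
    linarith

/-- For `ν > 0` and a vector `n ∈ ℝ^m`, the set
`S = {x | ν·e^(n·x) < 1}` is convex, and the function
`f(x) = -ln(1 - ν·e^(n·x))` is convex on `S`. -/
theorem thermo_term_convexOn (m : ℕ) (ν : ℝ) (hν : 0 < ν) (n : Fin m → ℝ) :
    Convex ℝ {x : Fin m → ℝ | ν * Real.exp (∑ i, n i * x i) < 1} ∧
    ConvexOn ℝ {x : Fin m → ℝ | ν * Real.exp (∑ i, n i * x i) < 1}
      (fun x : Fin m → ℝ => -Real.log (1 - ν * Real.exp (∑ i, n i * x i))) := by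
  set L : (Fin m → ℝ) → ℝ := fun x => ∑ i, n i * x i with hLdef
  have hLsum : ∀ (a b : ℝ) (x y : Fin m → ℝ), L (a • x + b • y) = a * L x + b * L y := by
    intro a b x y
    simp only [hLdef, Pi.add_apply, Pi.smul_apply, smul_eq_mul, mul_add,
      Finset.sum_add_distrib, Finset.mul_sum]
    congr 1 <;> exact Finset.sum_congr rfl (fun i _ => by ring)
  have key : ∀ (x y : Fin m → ℝ), ν * Real.exp (L x) < 1 →
      ν * Real.exp (L y) < 1 → ∀ (a b : ℝ), 0 ≤ a → 0 ≤ b → a + b = 1 →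
      ν * Real.exp (L (a • x + b • y)) ≤ a * (ν * Real.exp (L x)) + b * (ν * Real.exp (L y)) := by
    intro x y hx hy a b ha hb hab
    rw [hLsum]
    have hexp : Real.exp (a * L x + b * L y) ≤ a * Real.exp (L x) + b * Real.exp (L y) := by
      have := convexOn_exp.2 (mem_univ (L x)) (mem_univ (L y)) ha hb hab
      simpa using this
    nlinarith
  have hconv : Convex ℝ {x : Fin m → ℝ | ν * Real.exp (L x) < 1} := by
    intro x hx y hy a b ha hb hab
    have h1 := key x y hx hy a b ha hb hab
    have h2 : a * (ν * Real.exp (L x)) + b * (ν * Real.exp (L y)) < 1 :=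
      comb_lt_one ha hb hab hx hy
    exact lt_of_le_of_lt h1 h2
  refine ⟨hconv, hconv, ?_⟩
  intro x hx y hy a b ha hb hab
  simp only [smul_eq_mul]
  have hx' : ν * Real.exp (L x) < 1 := hx
  have hy' : ν * Real.exp (L y) < 1 := hy
  have h1 := key x y hx' hy' a b ha hb hab
  have h2 : a * (ν * Real.exp (L x)) + b * (ν * Real.exp (L y)) < 1 :=
    comb_lt_one ha hb hab hx' hy'
  have step1 : -Real.log (1 - ν * Real.exp (L (a • x + b • y))) ≤
      -Real.log (1 - (a * (ν * Real.exp (L x)) + b * (ν * Real.exp (L y)))) :=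
    g_monotoneOn (mem_Iio.2 (lt_of_le_of_lt h1 h2)) (mem_Iio.2 h2) h1
  have step2 := g_convexOn.2 (mem_Iio.2 hx') (mem_Iio.2 hy') ha hb hab
  simp only [smul_eq_mul] at step2
  calc -Real.log (1 - ν * Real.exp (L (a • x + b • y)))
      ≤ -Real.log (1 - (a * (ν * Real.exp (L x)) + b * (ν * Real.exp (L y)))) := step1
    _ ≤ a * -Real.log (1 - ν * Real.exp (L x)) + b * -Real.log (1 - ν * Real.exp (L y)) := step2
end

section
/- Fix a real constant q, a real number ν > 0, a vector n ∈ ℝ^m, and finitely many vectors a_1, …, a_K ∈ ℝ^m with real offsets b_1, …, b_K. Then the function g(x) = q - ln(1 - ν·e^{-n·x}) + ln( Σ_{k=1}^{K} e^{a_k·x + b_k} ) is convex on the convex set S = { x ∈ ℝ^m | ν·e^{-n·x} < 1 }. -/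
/-!
The thermodynamic term is `-log` of the concave positive function `1 - ν e^{-n·x}`, hence convex,
because `log` is concave and monotone. The kinetic term is log-sum-exp composed with an affine map,
and log-sum-exp is convex by Hölder's inequality with exponents `1/α`, `1/β`.
-/

open Real Set Finset Matrix

theorem ConcaveOn.comp_of_mapsTo {𝕜 E β γ : Type*} [Semiring 𝕜] [PartialOrder 𝕜]
    [AddCommMonoid E] [AddCommMonoid β] [PartialOrder β] [AddCommMonoid γ] [PartialOrder γ]
    [SMul 𝕜 E] [SMul 𝕜 β] [SMul 𝕜 γ] {s : Set E} {t : Set β} {f : E → β} {g : β → γ}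
    (hg : ConcaveOn 𝕜 t g) (hf : ConcaveOn 𝕜 s f) (hg' : MonotoneOn g t) (hst : MapsTo f s t) :
    ConcaveOn 𝕜 s (g ∘ f) :=
  ⟨hf.1, fun _ hx _ hy _ _ ha hb hab =>
    (hg.2 (hst hx) (hst hy) ha hb hab).trans <|
      hg' (hg.1 (hst hx) (hst hy) ha hb hab) (hst <| hf.1 hx hy ha hb hab) <|
        hf.2 hx hy ha hb hab⟩

theorem ConvexOn.concaveOn_log_one_sub {E : Type*} [AddCommGroup E] [Module ℝ E] {h : E → ℝ}
    (hh : ConvexOn ℝ univ h) : ConcaveOn ℝ {x | h x < 1} fun x => log (1 - h x) := by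
  have hS : Convex ℝ {x | h x < 1} := by simpa using hh.convex_lt 1
  exact strictConcaveOn_log_Ioi.concaveOn.comp_of_mapsTo
    ((concaveOn_const 1 hS).sub (hh.subset (subset_univ _) hS))
    strictMonoOn_log.monotoneOn fun _ hx => mem_Ioi.2 (sub_pos.2 hx)

theorem sum_exp_add_le_rpow_mul_rpow {ι : Type*} (s : Finset ι) (u v : ι → ℝ) {α β : ℝ}
    (hα : 0 < α) (hβ : 0 < β) (hab : α + β = 1) :
    ∑ i ∈ s, exp (α * u i + β * v i) ≤
      (∑ i ∈ s, exp (u i)) ^ α * (∑ i ∈ s, exp (v i)) ^ β := by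
  have holder := inner_le_Lp_mul_Lq_of_nonneg s (HolderConjugate.inv_inv hα hβ hab)
    (f := fun i => exp (α * u i)) (g := fun i => exp (β * v i))
    (fun _ _ => (exp_pos _).le) (fun _ _ => (exp_pos _).le)
  have hcancel : ∀ {c : ℝ}, c ≠ 0 → ∀ x, c * x * c⁻¹ = x := fun hc x => by field_simp
  simpa [← exp_add, ← exp_mul, hcancel hα.ne', hcancel hβ.ne'] using holder

theorem convexOn_log_sum_exp {ι : Type*} [Fintype ι] :
    ConvexOn ℝ univ fun u : ι → ℝ => log (∑ i, exp (u i)) := by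
  refine convexOn_iff_forall_pos.2 ⟨convex_univ, fun u _ v _ α β hα hβ hab => ?_⟩
  rcases isEmpty_or_nonempty ι with hι | hι
  · simp
  have hpos : ∀ w : ι → ℝ, 0 < ∑ i, exp (w i) := fun w =>
    sum_pos (fun _ _ => exp_pos _) univ_nonempty
  calc log (∑ i, exp ((α • u + β • v) i))
      ≤ log ((∑ i, exp (u i)) ^ α * (∑ i, exp (v i)) ^ β) :=
        log_le_log (hpos _) (sum_exp_add_le_rpow_mul_rpow _ u v hα hβ hab)
    _ = α • log (∑ i, exp (u i)) + β • log (∑ i, exp (v i)) := by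
        rw [log_mul (rpow_pos_of_pos (hpos u) _).ne' (rpow_pos_of_pos (hpos v) _).ne',
          log_rpow (hpos u), log_rpow (hpos v), smul_eq_mul, smul_eq_mul]

/-- The logarithm of the enzyme cost of one reaction,
`g(x) = q - ln(1 - ν·e^(-n·x)) + ln (∑ k, e^(a k · x + b k))`,
is convex on the convex set `S = {x | ν·e^(-n·x) < 1}`. -/
theorem log_enzyme_cost_convexOn (m K : ℕ) (q : ℝ) (ν : ℝ) (hν : 0 < ν)
    (n : Fin m → ℝ) (a : Fin K → Fin m → ℝ) (b : Fin K → ℝ) :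
    ConvexOn ℝ {x : Fin m → ℝ | ν * Real.exp (-(∑ i, n i * x i)) < 1}
      (fun x : Fin m → ℝ =>
        q - Real.log (1 - ν * Real.exp (-(∑ i, n i * x i)))
          + Real.log (∑ k : Fin K, Real.exp (∑ i, a k i * x i + b k))) := by
  have hthermo : ConvexOn ℝ univ fun x : Fin m → ℝ => ν * exp (-(n ⬝ᵥ x)) :=
    (convexOn_exp.comp_linearMap (-dotProductBilin ℝ ℝ n)).smul hν.le
  have hkin : ConvexOn ℝ univ fun x : Fin m → ℝ => log (∑ k, exp (a k ⬝ᵥ x + b k)) :=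
    convexOn_log_sum_exp.comp_affineMap
      ((mulVecLin a).toAffineMap + AffineMap.const ℝ (Fin m → ℝ) b)
  have hlog := hthermo.concaveOn_log_one_sub
  exact ((convexOn_const q hlog.1).sub hlog).add (hkin.subset (subset_univ _) hlog.1)
end

section
/- Fix a real constant C > 0, a real number ν > 0, a vector n ∈ ℝ^m, and finitely many vectors a_1, …, a_K ∈ ℝ^m with real offsets b_1, …, b_K. Then the function y(x) = C · (1 - ν·e^{-n·x})^{-1} · Σ_{k=1}^{K} e^{a_k·x + b_k} is convex on the convex set S = { x ∈ ℝ^m | ν·e^{-n·x} < 1 }. -/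
/-!
For `g = ν e^{-n·x} < 1` the factor `(1 - g)⁻¹` is the geometric series `∑ⱼ gʲ`, so each summand
`(1 - g)⁻¹ e^{a_k·x + b_k}` of the enzyme cost is the pointwise limit of the finite sums
`∑_{j<N} e^{j (ln ν - n·x) + a_k·x + b_k}`. These are sums of exponentials of affine functions,
hence convex on the whole space, and convexity passes to pointwise limits.
-/

open Filter Finset Real Topology

theorem ConvexOn.sum {𝕜 E β ι : Type*} [Semiring 𝕜] [PartialOrder 𝕜] [AddCommMonoid E]
    [AddCommMonoid β] [PartialOrder β] [IsOrderedAddMonoid β] [SMul 𝕜 E]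
    [Module 𝕜 β] {s : Set E} (hs : Convex 𝕜 s) (t : Finset ι) {f : ι → E → β}
    (hf : ∀ i ∈ t, ConvexOn 𝕜 s (f i)) : ConvexOn 𝕜 s fun x => ∑ i ∈ t, f i x := by
  classical
  induction t using Finset.induction_on with
  | empty => simpa using convexOn_const (0 : β) hs
  | insert i t hi ih =>
    simp only [Finset.sum_insert hi]
    exact (hf i (mem_insert_self i t)).add (ih fun j hj => hf j (mem_insert_of_mem hj))

theorem ConvexOn.of_tendsto {E ι : Type*} [AddCommMonoid E] [Module ℝ E] {s : Set E}
    {l : Filter ι} [l.NeBot] {F : ι → E → ℝ} {f : E → ℝ} (hF : ∀ᶠ i in l, ConvexOn ℝ s (F i))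
    (hlim : ∀ x ∈ s, Tendsto (fun i => F i x) l (𝓝 (f x))) : ConvexOn ℝ s f := by
  obtain ⟨-, hs, -⟩ := hF.exists
  refine ⟨hs, fun x hx y hy p q hp hq hpq => ?_⟩
  exact le_of_tendsto_of_tendsto (hlim _ (hs hx hy hp hq hpq))
    (((hlim x hx).const_smul p).add ((hlim y hy).const_smul q))
    (hF.mono fun i hi => hi.2 hx hy hp hq hpq)

section ExpAffine

variable {E : Type*} [AddCommGroup E] [Module ℝ E]

theorem convexOn_exp_affineMap (u : E →ᵃ[ℝ] ℝ) : ConvexOn ℝ Set.univ fun x => exp (u x) :=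
  convexOn_exp.comp_affineMap u

theorem convex_setOf_exp_affineMap_lt_one (u : E →ᵃ[ℝ] ℝ) : Convex ℝ {x | exp (u x) < 1} := by
  simpa using (convexOn_exp_affineMap u).convex_lt 1

theorem convexOn_inv_one_sub_exp_mul_exp (u v : E →ᵃ[ℝ] ℝ) :
    ConvexOn ℝ {x | exp (u x) < 1} fun x => (1 - exp (u x))⁻¹ * exp (v x) := by
  have hpartial : ∀ N : ℕ, ConvexOn ℝ {x | exp (u x) < 1}
      fun x => ∑ j ∈ range N, exp (u x) ^ j * exp (v x) := by
    intro N
    have hterm (j : ℕ) (x : E) : exp (u x) ^ j * exp (v x) = exp ((j • u + v) x) := by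
      simp [exp_add, ← exp_nat_mul, nsmul_eq_mul]
    simp only [hterm]
    exact (ConvexOn.sum convex_univ _ fun j _ => convexOn_exp_affineMap (j • u + v)).subset
      (Set.subset_univ _) (convex_setOf_exp_affineMap_lt_one u)
  refine ConvexOn.of_tendsto (l := atTop) (.of_forall hpartial) fun x hx => ?_
  simp only [← sum_mul]
  exact ((hasSum_geometric_of_lt_one (exp_pos _).le hx).tendsto_sum_nat).mul_const _

end ExpAffine

/-- The enzyme cost of a single reaction,
`y(x) = C · (1 - ν·e^(-n·x))⁻¹ · ∑ k, e^(a k · x + b k)`,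
is convex on the convex set `S = {x | ν·e^(-n·x) < 1}`. -/
theorem enzyme_cost_convexOn (m K : ℕ) (C : ℝ) (hC : 0 < C) (ν : ℝ) (hν : 0 < ν)
    (n : Fin m → ℝ) (a : Fin K → Fin m → ℝ) (b : Fin K → ℝ) :
    ConvexOn ℝ {x : Fin m → ℝ | ν * Real.exp (-(∑ i, n i * x i)) < 1}
      (fun x : Fin m → ℝ =>
        C * (1 - ν * Real.exp (-(∑ i, n i * x i)))⁻¹
          * ∑ k : Fin K, Real.exp (∑ i, a k i * x i + b k)) := by
  let u : (Fin m → ℝ) →ᵃ[ℝ] ℝ :=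
    AffineMap.const ℝ _ (log ν) - (dotProductBilin ℝ ℝ n).toAffineMap
  let v (k : Fin K) : (Fin m → ℝ) →ᵃ[ℝ] ℝ :=
    (dotProductBilin ℝ ℝ (a k)).toAffineMap + AffineMap.const ℝ _ (b k)
  have hu (x : Fin m → ℝ) : exp (u x) = ν * exp (-(∑ i, n i * x i)) := by
    simp [u, exp_sub, exp_neg, exp_log hν, dotProduct, div_eq_mul_inv]
  have hv (k : Fin K) (x : Fin m → ℝ) : v k x = ∑ i, a k i * x i + b k := by
    simp [v, dotProduct]
  have hsum := (ConvexOn.sum (convex_setOf_exp_affineMap_lt_one u) univ fun k _ =>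
    convexOn_inv_one_sub_exp_mul_exp u (v k)).smul hC.le
  simp only [hu, hv, smul_eq_mul, ← mul_sum] at hsum
  simpa only [mul_assoc] using hsum
end

section
/- Fix L reactions. For each reaction l = 1, …, L, fix a constant C_l > 0, a number ν_l > 0, a vector n_l ∈ ℝ^m, and finitely many vectors a_{l,1}, …, a_{l,K_l} ∈ ℝ^m with offsets b_{l,1}, …, b_{l,K_l} ∈ ℝ. Then the total enzyme cost y(x) = Σ_{l=1}^{L} C_l · (1 - ν_l·e^{-n_l·x})^{-1} · Σ_{k=1}^{K_l} e^{a_{l,k}·x + b_{l,k}} is a convex function on the convex set P = ∩_{l=1}^{L} { x ∈ ℝ^m | ν_l·e^{-n_l·x} < 1 }. -/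
open Real Set Finset

section Aux

variable {E : Type*} [AddCommGroup E] [Module ℝ E] {s : Set E}

lemma convexOn_congr' {f g : E → ℝ} (hf : ConvexOn ℝ s f) (h : ∀ x ∈ s, f x = g x) :
    ConvexOn ℝ s g :=
  ⟨hf.1, fun x hx y hy p q hp hq hpq => by
    rw [← h _ hx, ← h _ hy, ← h _ (hf.1 hx hy hp hq hpq)]
    exact hf.2 hx hy hp hq hpq⟩

lemma convexOn_finset_sum {ι : Type*} (t : Finset ι) {f : ι → E → ℝ} (hs : Convex ℝ s)
    (hf : ∀ i ∈ t, ConvexOn ℝ s (f i)) :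
    ConvexOn ℝ s (fun x => ∑ i ∈ t, f i x) := by
  classical
  induction t using Finset.induction with
  | empty => simpa using convexOn_const (0 : ℝ) hs
  | @insert a t ha ih =>
    have he : (fun x => ∑ i ∈ insert a t, f i x)
        = (f a + fun x => ∑ i ∈ t, f i x) := by
      funext x; simp [Finset.sum_insert ha]
    rw [he]
    exact (hf a (Finset.mem_insert_self a t)).add
      (ih fun i hi => hf i (Finset.mem_insert_of_mem hi))

lemma convexOn_exp_comp {f : E → ℝ} (hf : ConvexOn ℝ s f) :
    ConvexOn ℝ s (fun x => Real.exp (f x)) := by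
  refine ⟨hf.1, fun x hx y hy p q hp hq hpq => ?_⟩
  calc Real.exp (f (p • x + q • y)) ≤ Real.exp (p * f x + q * f y) :=
        Real.exp_le_exp.2 (by simpa [smul_eq_mul] using hf.2 hx hy hp hq hpq)
    _ ≤ p * Real.exp (f x) + q * Real.exp (f y) := by
        simpa using convexOn_exp.2 (mem_univ (f x)) (mem_univ (f y)) hp hq hpq

lemma convexOn_neg_log_one_sub : ConvexOn ℝ (Iio (1:ℝ)) (fun t : ℝ => -Real.log (1 - t)) := by
  refine ⟨convex_Iio 1, fun t ht u hu p q hp hq hpq => ?_⟩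
  have h1 : (0:ℝ) < 1 - t := by have := mem_Iio.1 ht; linarith
  have h2 : (0:ℝ) < 1 - u := by have := mem_Iio.1 hu; linarith
  have key := strictConcaveOn_log_Ioi.concaveOn.2 (mem_Ioi.2 h1) (mem_Ioi.2 h2) hp hq hpq
  have he : 1 - (p * t + q * u) = p * (1 - t) + q * (1 - u) := by nlinarith
  simp only [smul_eq_mul] at key ⊢
  rw [he]
  linarith

lemma convexOn_neg_log_one_sub_comp {f : E → ℝ} (hf : ConvexOn ℝ s f)
    (hlt : ∀ x ∈ s, f x < 1) :
    ConvexOn ℝ s (fun x => -Real.log (1 - f x)) := by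
  refine ⟨hf.1, fun x hx y hy p q hp hq hpq => ?_⟩
  have hx1 := hlt x hx
  have hy1 := hlt y hy
  have hcomb : p * f x + q * f y < 1 := by
    rcases eq_or_lt_of_le hp with hp0 | hp0
    · have hq1 : q = 1 := by linarith
      nlinarith
    · nlinarith [mul_lt_mul_of_pos_left hx1 hp0, mul_le_mul_of_nonneg_left hy1.le hq]
  have h0 : (0:ℝ) < 1 - (p * f x + q * f y) := by linarith
  have hle : f (p • x + q • y) ≤ p * f x + q * f y := by
    simpa [smul_eq_mul] using hf.2 hx hy hp hq hpq
  have step1 : -Real.log (1 - f (p • x + q • y)) ≤ -Real.log (1 - (p * f x + q * f y)) := by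
    have := Real.log_le_log h0 (by linarith : 1 - (p * f x + q * f y) ≤ 1 - f (p • x + q • y))
    linarith
  have step2 := convexOn_neg_log_one_sub.2 (mem_Iio.2 hx1) (mem_Iio.2 hy1) hp hq hpq
  simp only [smul_eq_mul] at step2 ⊢
  linarith

lemma convexOn_affine {m : ℕ} (w : Fin m → ℝ) (c : ℝ) (hs : Convex ℝ s)
    (φ : E → Fin m → ℝ) (hφ : ∀ (p q : ℝ) (x y : E) (i : Fin m),
      φ (p • x + q • y) i = p * φ x i + q * φ y i) :
    ConvexOn ℝ s (fun x => ∑ i, w i * φ x i + c) := by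
  refine ⟨hs, fun x hx y hy p q hp hq hpq => le_of_eq ?_⟩
  have hsum : ∑ i, w i * φ (p • x + q • y) i
      = p * ∑ i, w i * φ x i + q * ∑ i, w i * φ y i := by
    rw [Finset.mul_sum, Finset.mul_sum, ← Finset.sum_add_distrib]
    exact Finset.sum_congr rfl fun i _ => by rw [hφ p q x y i]; ring
  simp only [smul_eq_mul]
  rw [hsum]; linear_combination (-c) * hpq

end Aux

/-- Main theorem: the total enzyme cost
`y(x) = ∑ l, C l · (1 - ν l · e^(-n l · x))⁻¹ · ∑ k, e^(a l k · x + b l k)`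
is a convex function on the metabolite polytope part
`P = ⋂ l {x | ν l · e^(-n l · x) < 1}`. -/
theorem total_enzyme_cost_convexOn (m L : ℕ)
    (C : Fin L → ℝ) (hC : ∀ l, 0 < C l)
    (ν : Fin L → ℝ) (hν : ∀ l, 0 < ν l)
    (n : Fin L → Fin m → ℝ)
    (K : Fin L → ℕ)
    (a : (l : Fin L) → Fin (K l) → Fin m → ℝ)
    (b : (l : Fin L) → Fin (K l) → ℝ) :
    ConvexOn ℝ (⋂ l : Fin L, {x : Fin m → ℝ | ν l * Real.exp (-(∑ i, n l i * x i)) < 1})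
      (fun x : Fin m → ℝ =>
        ∑ l : Fin L, C l * (1 - ν l * Real.exp (-(∑ i, n l i * x i)))⁻¹
          * ∑ k : Fin (K l), Real.exp (∑ i, a l k i * x i + b l k)) := by
  classical
  set f : Fin L → (Fin m → ℝ) → ℝ :=
    fun l x => ν l * Real.exp (-(∑ i, n l i * x i)) with hf_def
  have hφ : ∀ (p q : ℝ) (x y : Fin m → ℝ) (i : Fin m),
      (p • x + q • y) i = p * x i + q * y i := by
    intro p q x y i; simp
  -- each f l is convex on univ
  have hf_convex : ∀ l, ConvexOn ℝ (univ : Set (Fin m → ℝ)) (f l) := by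
    intro l
    have h1 : ConvexOn ℝ (univ : Set (Fin m → ℝ))
        (fun x : Fin m → ℝ => ∑ i, (-(n l i)) * x i + 0) :=
      convexOn_affine _ 0 convex_univ id hφ
    have h2 := convexOn_exp_comp h1
    have h3 := h2.smul (le_of_lt (hν l))
    refine convexOn_congr' h3 fun x _ => ?_
    simp only [hf_def, smul_eq_mul]
    congr 2
    rw [add_zero, ← Finset.sum_neg_distrib]
    exact Finset.sum_congr rfl fun i _ => by ring
  -- the set P
  set P : Set (Fin m → ℝ) :=
    ⋂ l : Fin L, {x : Fin m → ℝ | ν l * Real.exp (-(∑ i, n l i * x i)) < 1} with hP_def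
  have hP_convex : Convex ℝ P := by
    refine convex_iInter fun l => ?_
    have := (hf_convex l).convex_lt 1
    simpa [hf_def] using this
  have hP_lt : ∀ l, ∀ x ∈ P, f l x < 1 := by
    intro l x hx
    have := Set.mem_iInter.1 hx l
    simpa [hf_def] using this
  -- H l = -log (1 - f l) is convex on P
  have hH : ∀ l, ConvexOn ℝ P (fun x => -Real.log (1 - f l x)) :=
    fun l => convexOn_neg_log_one_sub_comp
      (((hf_convex l)).subset (Set.subset_univ P) hP_convex) (hP_lt l)
  -- per (l,k) convex term
  have hterm : ∀ (l : Fin L) (k : Fin (K l)), ConvexOn ℝ P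
      (fun x => C l * Real.exp ((∑ i, a l k i * x i + b l k) + (-Real.log (1 - f l x)))) := by
    intro l k
    have haff : ConvexOn ℝ P (fun x : Fin m → ℝ => ∑ i, a l k i * x i + b l k) :=
      convexOn_affine _ _ hP_convex id hφ
    have hsum : ConvexOn ℝ P
        (fun x => (∑ i, a l k i * x i + b l k) + (-Real.log (1 - f l x))) :=
      haff.add (hH l)
    have := (convexOn_exp_comp hsum).smul (le_of_lt (hC l))
    simpa [smul_eq_mul] using this
  -- sum over k, then sum over l
  have hsuml : ∀ l : Fin L, ConvexOn ℝ P
      (fun x => ∑ k : Fin (K l),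
        C l * Real.exp ((∑ i, a l k i * x i + b l k) + (-Real.log (1 - f l x)))) :=
    fun l => convexOn_finset_sum Finset.univ hP_convex fun k _ => hterm l k
  have htotal : ConvexOn ℝ P
      (fun x => ∑ l : Fin L, ∑ k : Fin (K l),
        C l * Real.exp ((∑ i, a l k i * x i + b l k) + (-Real.log (1 - f l x)))) :=
    convexOn_finset_sum Finset.univ hP_convex fun l _ => hsuml l
  -- rewrite to target form on P
  refine convexOn_congr' htotal fun x hx => ?_
  refine Finset.sum_congr rfl fun l _ => ?_
  have hpos : 0 < 1 - f l x := by linarith [hP_lt l x hx]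
  have hinv : (1 - f l x)⁻¹ = Real.exp (-Real.log (1 - f l x)) := by
    rw [Real.exp_neg, Real.exp_log hpos]
  rw [Finset.mul_sum]
  refine Finset.sum_congr rfl fun k _ => ?_
  rw [Real.exp_add]
  simp only [hf_def] at hinv ⊢
  rw [hinv]; ring
end

section
/- Let A, B, P, Q, K_A, K_B, K_P, K_Q, k⁺, k⁻, ε be strictly positive real numbers. Define K_eq = (k⁺/k⁻)·(K_P·K_Q)/(K_A·K_B), the mass-action ratio Γ = (P·Q)/(A·B), the driving force Θ = ln(K_eq/Γ), the denominator D = (1 + A/K_A)(1 + B/K_B) + (1 + P/K_P)(1 + Q/K_Q) - 1, and the kinetic efficiency η^kin = ( (K_A·K_B)/(A·B) · D )^{-1}. Then ε · ( k⁺·(A·B)/(K_A·K_B) - k⁻·(P·Q)/(K_P·K_Q) ) / D = ε · k⁺ · (1 - e^{-Θ}) · η^kin. -/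
/-- Factorization of the common modular rate law for a bimolecular reaction
`A + B ⇌ P + Q` into the separable form `v = ε · k⁺ · η^th · η^kin`. -/
theorem rate_law_factorization
    (A B P Q KA KB KP KQ kplus kminus ε : ℝ)
    (hA : 0 < A) (hB : 0 < B) (hP : 0 < P) (hQ : 0 < Q)
    (hKA : 0 < KA) (hKB : 0 < KB) (hKP : 0 < KP) (hKQ : 0 < KQ)
    (hkplus : 0 < kplus) (hkminus : 0 < kminus) (hε : 0 < ε)
    (Keq Γ Θ D ηkin : ℝ)
    (hKeq : Keq = (kplus / kminus) * (KP * KQ) / (KA * KB))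
    (hΓ : Γ = (P * Q) / (A * B))
    (hΘ : Θ = Real.log (Keq / Γ))
    (hD : D = (1 + A / KA) * (1 + B / KB) + (1 + P / KP) * (1 + Q / KQ) - 1)
    (hηkin : ηkin = ((KA * KB) / (A * B) * D)⁻¹) :
    ε * (kplus * (A * B) / (KA * KB) - kminus * (P * Q) / (KP * KQ)) / D
      = ε * kplus * (1 - Real.exp (-Θ)) * ηkin := by
  have hKeqpos : 0 < Keq := by rw [hKeq]; positivity
  have hΓpos : 0 < Γ := by rw [hΓ]; positivity
  have hDpos : 0 < D := by
    rw [hD]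
    have h1 : 1 < (1 + A / KA) * (1 + B / KB) := by
      have : (1:ℝ) * 1 < (1 + A / KA) * (1 + B / KB) := by
        apply mul_lt_mul' <;> [skip; skip; norm_num; positivity]
        · linarith [div_pos hA hKA]
        · linarith [div_pos hB hKB]
      linarith
    nlinarith [mul_pos (by positivity : (0:ℝ) < 1 + P / KP) (by positivity : (0:ℝ) < 1 + Q / KQ)]
  have hexp : Real.exp (-Θ) = Γ / Keq := by
    rw [hΘ, ← Real.log_inv, Real.exp_log (by positivity), inv_div]
  rw [hexp, hηkin, hKeq, hΓ]
  field_simp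
end
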